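/- Fix λ, β, ν, w > 0 and δ with 0 < δ < λ/4. Define H(x,z₁,z₂) = x^{−δ} + x + z₁ + z₂ on (0,∞) × ℝ₊², and let B be the generator B(f)(x,z) = −x ∂_x f + ∂_{z₁} f + ∂_{z₂} f + λ(f(x+w, 0, z₂) − f(x,z)) + (ν+βx)(f(x, z₁, 0) − f(x,z)), where z = (z₁,z₂). Then there exist x₀ > 0 and K₀ > 0 such that B(H)(x,z) ≤ −1 whenever x ≤ x₀, or whenever x ≥ x₀ and H(x,z) ≥ K₀. In particular H is a Lyapunov function for B. -/
import Mathlib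


open Real

/-- The Lyapunov candidate `H(x,z₁,z₂) = x^{-δ} + x + z₁ + z₂`. -/
noncomputable def lyapH (δ x z₁ z₂ : ℝ) : ℝ := x ^ (-δ) + x + z₁ + z₂

/-- The generator of the fast nearest-neighbor pair-based process applied to `lyapH`:
`B(f) = -x ∂ₓ f + ∂_{z₁} f + ∂_{z₂} f + λ(f(x+w,0,z₂) - f) + (ν+βx)(f(x,z₁,0) - f)`. -/
noncomputable def genBH (lam β ν w δ x z₁ z₂ : ℝ) : ℝ :=
  -x * (-δ * x ^ (-δ - 1) + 1) + 1 + 1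
    + lam * (lyapH δ (x + w) 0 z₂ - lyapH δ x z₁ z₂)
    + (ν + β * x) * (lyapH δ x z₁ 0 - lyapH δ x z₁ z₂)

theorem stmt9 (lam β ν w δ : ℝ)
    (hlam : 0 < lam) (hβ : 0 < β) (hν : 0 < ν) (hw : 0 < w)
    (hδ0 : 0 < δ) (hδ : δ < lam / 4) :
    ∃ x₀ > (0:ℝ), ∃ K₀ > (0:ℝ), ∀ x z₁ z₂ : ℝ, 0 < x → 0 ≤ z₁ → 0 ≤ z₂ →
      (x ≤ x₀ ∨ (x₀ ≤ x ∧ K₀ ≤ lyapH δ x z₁ z₂)) →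
      genBH lam β ν w δ x z₁ z₂ ≤ -1 := by
  have hld : 0 < lam - δ := by linarith
  set C : ℝ := lam * w ^ (-δ) + 2 + lam * w with hC
  have hwpow : (0:ℝ) < w ^ (-δ) := Real.rpow_pos_of_pos hw _
  have hCpos : 0 < C := by positivity
  set x₀ : ℝ := ((lam - δ) / (C + 1)) ^ (1 / δ) with hx₀def
  have hbpos : (0:ℝ) < (lam - δ) / (C + 1) := by positivity
  have hx₀pos : 0 < x₀ := Real.rpow_pos_of_pos hbpos _
  have hx₀pow : x₀ ^ (-δ) = (C + 1) / (lam - δ) := by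
    rw [hx₀def, ← Real.rpow_mul hbpos.le]
    rw [show (1 / δ) * (-δ) = -1 by field_simp]
    rw [Real.rpow_neg_one, inv_div]
  set U : ℝ := (C + 1) / (lam - δ) with hU
  have hUpos : 0 < U := by positivity
  set m : ℝ := min 1 (min lam ν) with hm
  have hmpos : 0 < m := by
    simp only [hm, lt_min_iff]; exact ⟨one_pos, hlam, hν⟩
  have hm1 : m ≤ 1 := min_le_left _ _
  have hm2 : m ≤ lam := le_trans (min_le_right _ _) (min_le_left _ _)
  have hm3 : m ≤ ν := le_trans (min_le_right _ _) (min_le_right _ _)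
  refine ⟨x₀, hx₀pos, ((δ + m) * U + 3 + lam * w) / m, by positivity, ?_⟩
  intro x z₁ z₂ hx hz₁ hz₂ hcase
  set K₀ : ℝ := ((δ + m) * U + 3 + lam * w) / m with hK₀
  have hmK₀ : m * K₀ = (δ + m) * U + 3 + lam * w := by
    rw [hK₀]; field_simp
  have hpow : x ^ (-δ - 1) * x = x ^ (-δ) := by
    rw [← Real.rpow_add_one hx.ne']; ring_nf
  have key : genBH lam β ν w δ x z₁ z₂ =
      δ * x ^ (-δ) - x + 2 + lam * (x + w) ^ (-δ) - lam * x ^ (-δ)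
        + lam * w - lam * z₁ - ν * z₂ - β * x * z₂ := by
    simp only [genBH, lyapH]
    linear_combination δ * hpow
  have hvu : (x + w) ^ (-δ) ≤ x ^ (-δ) :=
    Real.rpow_le_rpow_of_nonpos hx (by linarith) (by linarith)
  rcases hcase with hle | ⟨hge, hH⟩
  · -- x ≤ x₀
    have hvw : (x + w) ^ (-δ) ≤ w ^ (-δ) :=
      Real.rpow_le_rpow_of_nonpos hw (by linarith) (by linarith)
    have hu : U ≤ x ^ (-δ) := by
      rw [← hx₀pow]
      exact Real.rpow_le_rpow_of_nonpos hx hle (by linarith)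
    have hu' : C + 1 ≤ (lam - δ) * x ^ (-δ) := by
      rw [hU] at hu
      calc C + 1 = ((C + 1) / (lam - δ)) * (lam - δ) := by field_simp
        _ ≤ x ^ (-δ) * (lam - δ) := by
            exact mul_le_mul_of_nonneg_right hu hld.le
        _ = (lam - δ) * x ^ (-δ) := by ring
    have h1 : lam * (x + w) ^ (-δ) ≤ lam * w ^ (-δ) :=
      mul_le_mul_of_nonneg_left hvw hlam.le
    have h2 : 0 ≤ lam * z₁ := by positivity
    have h3 : 0 ≤ ν * z₂ := by positivity
    have h4 : 0 ≤ β * x * z₂ := by positivity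
    rw [key]; nlinarith [hu']
  · -- x₀ ≤ x and K₀ ≤ H
    simp only [lyapH] at hH
    have hu : x ^ (-δ) ≤ U := by
      rw [← hx₀pow]
      exact Real.rpow_le_rpow_of_nonpos hx₀pos hge (by linarith)
    have h1 : m * x ≤ x := by nlinarith
    have h2 : m * z₁ ≤ lam * z₁ := mul_le_mul_of_nonneg_right hm2 hz₁
    have h3 : m * z₂ ≤ ν * z₂ := mul_le_mul_of_nonneg_right hm3 hz₂
    have h4 : lam * (x + w) ^ (-δ) ≤ lam * x ^ (-δ) :=
      mul_le_mul_of_nonneg_left hvu hlam.le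
    have h5 : δ * x ^ (-δ) ≤ δ * U := mul_le_mul_of_nonneg_left hu hδ0.le
    have h6 : 0 ≤ β * x * z₂ := by positivity
    have h8 : m * x ^ (-δ) ≤ m * U := mul_le_mul_of_nonneg_left hu hmpos.le
    have h7 : m * K₀ - m * x ^ (-δ) ≤ m * x + m * z₁ + m * z₂ := by
      have h := mul_le_mul_of_nonneg_left hH hmpos.le
      linarith [mul_add m (x ^ (-δ) + x + z₁) z₂, mul_add m (x ^ (-δ) + x) z₁,
        mul_add m (x ^ (-δ)) x]
    rw [key]; linarith
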